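/- arXiv:1711.02476 — 11 statements merged into one kernel-verified Lean document; each statement's English description precedes it below -/
import Mathlib

section
/- For all finite sets r, s of tokens with r nonempty and every natural number i with |r \ s| ≥ i, the Jaccard similarity satisfies |r ∩ s| / |r ∪ s| ≤ (|r| − i) / |r| (as real numbers, with the cardinalities cast to ℝ; note i ≤ |r| since |r \ s| ≤ |r|). -/
namespace Finset

variable {α : Type*} [DecidableEq α]

theorem card_inter_div_card_union_le_card_inter_div_card_left (r s : Finset α) :
    ((r ∩ s).card : ℝ) / (r ∪ s).card ≤ ((r ∩ s).card : ℝ) / r.card := by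
  rcases r.eq_empty_or_nonempty with rfl | hr
  · simp
  · exact div_le_div_of_nonneg_left (Nat.cast_nonneg _) (mod_cast hr.card_pos)
      (mod_cast card_le_card subset_union_left)

theorem card_inter_add_le_card_of_le_card_sdiff {r s : Finset α} {i : ℕ}
    (hi : i ≤ (r \ s).card) : (r ∩ s).card + i ≤ r.card := by
  have := card_inter_add_card_sdiff r s
  omega

end Finset

theorem jaccard_positional_upper_bound_general
    {α : Type*} [DecidableEq α] (r s : Finset α) (i : ℕ)
    (hi : i ≤ (r \ s).card) :
    ((r ∩ s).card : ℝ) / ((r ∪ s).card : ℝ) ≤ ((r.card : ℝ) - i) / (r.card : ℝ) := by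
  have hinter : ((r ∩ s).card : ℝ) ≤ r.card - i :=
    le_sub_iff_add_le.mpr (mod_cast Finset.card_inter_add_le_card_of_le_card_sdiff hi)
  calc ((r ∩ s).card : ℝ) / (r ∪ s).card
      ≤ ((r ∩ s).card : ℝ) / r.card :=
        Finset.card_inter_div_card_union_le_card_inter_div_card_left r s
    _ ≤ (r.card - i) / r.card := div_le_div_of_nonneg_right hinter (Nat.cast_nonneg _)

/-- Positional upper bound for Jaccard similarity. -/
theorem jaccard_positional_upper_bound
    {α : Type*} [DecidableEq α] (r s : Finset α) (hr : r.Nonempty) (i : ℕ)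
    (hi : i ≤ (r \ s).card) :
    ((r ∩ s).card : ℝ) / ((r ∪ s).card : ℝ) ≤ ((r.card : ℝ) - i) / (r.card : ℝ) :=
  jaccard_positional_upper_bound_general r s i hi
end

section
/- For all nonempty finite sets r, s of tokens and every natural number i with |r \ s| ≥ i, the Cosine similarity satisfies |r ∩ s| / √(|r| · |s|) ≤ √((|r| − i) / |r|) (as real numbers, with the cardinalities cast to ℝ). -/
/-!
The cosine factors as `√(|r ∩ s| / |r|) · √(|r ∩ s| / |s|)`. The second factor is at most `1`,
and `|r ∩ s| = |r| - |r \ s| ≤ |r| - i` bounds the first.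
-/

open Finset Real

lemma div_sqrt_mul_le_sqrt_div {a x y : ℝ} (ha : 0 ≤ a) (hay : a ≤ y) :
    a / √(x * y) ≤ √(a / x) :=
  calc a / √(x * y) = (√a / √x) * (√a / √y) := by
        rw [sqrt_mul' x (ha.trans hay), ← mul_div_mul_comm, mul_self_sqrt ha]
    _ ≤ (√a / √x) * 1 := by
        gcongr
        exact div_le_one_of_le₀ (sqrt_le_sqrt hay) (sqrt_nonneg y)
    _ = √(a / x) := by rw [mul_one, sqrt_div ha]

theorem cosine_positional_upper_bound_general
    {α : Type*} [DecidableEq α] (r s : Finset α)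
    (i : ℕ) (hi : i ≤ (r \ s).card) :
    ((r ∩ s).card : ℝ) / Real.sqrt ((r.card : ℝ) * (s.card : ℝ)) ≤
      Real.sqrt (((r.card : ℝ) - i) / (r.card : ℝ)) := by
  have hinter : ((r ∩ s).card : ℝ) + i ≤ r.card := by
    rw [← card_inter_add_card_sdiff r s]
    exact_mod_cast Nat.add_le_add_left hi _
  calc ((r ∩ s).card : ℝ) / √((r.card : ℝ) * s.card) ≤ √((r ∩ s).card / r.card) :=
        div_sqrt_mul_le_sqrt_div (Nat.cast_nonneg _)
          (by exact_mod_cast card_le_card inter_subset_right)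
    _ ≤ √((r.card - i) / r.card) :=
        sqrt_le_sqrt (div_le_div_of_nonneg_right (by linarith) (Nat.cast_nonneg _))

/-- Positional upper bound for Cosine similarity. -/
theorem cosine_positional_upper_bound
    {α : Type*} [DecidableEq α] (r s : Finset α) (hr : r.Nonempty) (hs : s.Nonempty)
    (i : ℕ) (hi : i ≤ (r \ s).card) :
    ((r ∩ s).card : ℝ) / Real.sqrt ((r.card : ℝ) * (s.card : ℝ)) ≤
      Real.sqrt (((r.card : ℝ) - i) / (r.card : ℝ)) :=
  cosine_positional_upper_bound_general r s i hi
end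

section
/- For all finite sets r, s of tokens with r nonempty and every natural number i with |r \ s| ≥ i, the Dice similarity satisfies 2·|r ∩ s| / (|r| + |s|) ≤ 2·(|r| − i) / (2·|r| − i) (as real numbers, with the cardinalities cast to ℝ). -/
/-!
Write `c = |r ∩ s|` and `n = |r|`. Since `c ≤ |s|`, the Dice similarity is at most `2c / (n + c)`,
and `x ↦ 2x / (n + x)` is monotone on `x ≥ 0`; as `c ≤ n - i`, this gives the bound
`2(n - i) / (n + (n - i))`.
-/

lemma two_mul_div_add_le_two_mul_div_add_of_le {n c m : ℝ} (hn : 0 ≤ n) (hc : 0 ≤ c)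
    (hcm : c ≤ m) : 2 * c / (n + m) ≤ 2 * c / (n + c) := by
  rcases hc.eq_or_lt with rfl | hc_pos
  · simp
  · exact div_le_div_of_nonneg_left (by positivity) (by positivity) (by linarith)

lemma monotoneOn_two_mul_div_add (n : ℝ) (hn : 0 ≤ n) :
    MonotoneOn (fun x : ℝ => 2 * x / (n + x)) (Set.Ici 0) := by
  intro x hx y hy hxy
  simp only [Set.mem_Ici] at hx hy
  rcases hx.eq_or_lt with rfl | hx_pos
  · simp only [mul_zero, zero_div]
    positivity
  · rw [div_le_div_iff₀ (by positivity) (by linarith)]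
    nlinarith

theorem dice_positional_upper_bound_general
    {α : Type*} [DecidableEq α] (r s : Finset α) (i : ℕ)
    (hi : i ≤ (r \ s).card) :
    2 * ((r ∩ s).card : ℝ) / ((r.card : ℝ) + (s.card : ℝ)) ≤
      2 * ((r.card : ℝ) - i) / (2 * (r.card : ℝ) - i) := by
  have h_split : (r \ s).card + (r ∩ s).card = r.card := Finset.card_sdiff_add_card_inter r s
  have h_inter_le : ((r ∩ s).card : ℝ) ≤ r.card - i := by
    rw [le_sub_iff_add_le]
    exact_mod_cast (by omega : (r ∩ s).card + i ≤ r.card)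
  have h_inter_le_s : ((r ∩ s).card : ℝ) ≤ s.card := by
    exact_mod_cast Finset.card_le_card Finset.inter_subset_right
  calc 2 * ((r ∩ s).card : ℝ) / (r.card + s.card)
      ≤ 2 * ((r ∩ s).card : ℝ) / (r.card + (r ∩ s).card) :=
        two_mul_div_add_le_two_mul_div_add_of_le (by positivity) (by positivity) h_inter_le_s
    _ ≤ 2 * ((r.card : ℝ) - i) / (r.card + (r.card - i)) :=
        monotoneOn_two_mul_div_add _ (by positivity) (Set.mem_Ici.2 (by positivity))
          (Set.mem_Ici.2 (by linarith [(r ∩ s).card.cast_nonneg (α := ℝ)])) h_inter_le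
    _ = 2 * ((r.card : ℝ) - i) / (2 * r.card - i) := by ring_nf

/-- Positional upper bound for Dice similarity. -/
theorem dice_positional_upper_bound
    {α : Type*} [DecidableEq α] (r s : Finset α) (hr : r.Nonempty) (i : ℕ)
    (hi : i ≤ (r \ s).card) :
    2 * ((r ∩ s).card : ℝ) / ((r.card : ℝ) + (s.card : ℝ)) ≤
      2 * ((r.card : ℝ) - i) / (2 * (r.card : ℝ) - i) :=
  dice_positional_upper_bound_general r s i hi
end

section
/- Let r be a finite set of n tokens given by an injective enumeration a_1, …, a_n of its elements, let 1 ≤ ρ ≤ n, and let s be a finite set of tokens containing none of a_1, …, a_{ρ−1}. Then the Jaccard similarity satisfies |r ∩ s| / |r ∪ s| ≤ (n − ρ + 1) / n. -/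
open Finset

section Jaccard

variable {α : Type*} [DecidableEq α]

noncomputable def jaccard (r s : Finset α) : ℝ := #(r ∩ s) / #(r ∪ s)

theorem jaccard_le_of_subset_of_disjoint {r s t : Finset α} (htr : t ⊆ r) (hts : Disjoint t s) :
    jaccard r s ≤ ((#r : ℝ) - #t) / #r := by
  rcases r.eq_empty_or_nonempty with rfl | hr
  · simp [jaccard]
  have hnum : #(r ∩ s) + #t ≤ #r := by
    rw [← card_union_of_disjoint (hts.symm.mono_left inter_subset_right)]
    exact card_le_card (union_subset inter_subset_left htr)
  have hden : #r ≤ #(r ∪ s) := card_le_card subset_union_left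
  have ht : #t ≤ #r := card_le_card htr
  exact div_le_div₀ (sub_nonneg.2 (by exact_mod_cast ht))
    (le_sub_iff_add_le.2 (by exact_mod_cast hnum)) (by exact_mod_cast hr.card_pos)
    (by exact_mod_cast hden)

end Jaccard

theorem jaccard_lookup_position_upper_bound_general
    {α : Type*} [DecidableEq α] (n : ℕ) (a : Fin n → α) (ha : Function.Injective a)
    (r : Finset α) (hr : r = Finset.image a Finset.univ)
    (ρ : ℕ) (hρn : ρ ≤ n)
    (s : Finset α) (hs : ∀ j : Fin n, (j : ℕ) < ρ - 1 → a j ∉ s) :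
    ((r ∩ s).card : ℝ) / ((r ∪ s).card : ℝ) ≤ ((n : ℝ) - ρ + 1) / (n : ℝ) := by
  set t := ({j : Fin n | (j : ℕ) < ρ - 1} : Finset (Fin n)).image a
  have htr : t ⊆ r := hr ▸ image_subset_image (subset_univ _)
  have hts : Disjoint t s := by
    refine disjoint_left.2 fun x hx => ?_
    obtain ⟨j, hj, rfl⟩ := mem_image.1 hx
    exact hs j (mem_filter.1 hj).2
  have hr_card : #r = n := by rw [hr, card_image_of_injective _ ha, card_univ, Fintype.card_fin]
  have ht_card : #t = ρ - 1 := by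
    rw [card_image_of_injective _ ha, Fin.card_filter_val_lt]
    omega
  calc jaccard r s ≤ ((#r : ℝ) - #t) / #r := jaccard_le_of_subset_of_disjoint htr hts
    _ ≤ ((n : ℝ) - ρ + 1) / n := by
      rw [hr_card, ht_card]
      refine div_le_div_of_nonneg_right ?_ n.cast_nonneg
      -- an inequality, not an equation: `ρ - 1` truncates to `0` at `ρ = 0`
      have : (ρ : ℝ) ≤ ((ρ - 1 : ℕ) : ℝ) + 1 := by exact_mod_cast le_tsub_add
      linarith

/-- Positional upper bound ub(|r|, ρ) for Jaccard in candidate generation: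
if `s` contains none of the first `ρ - 1` tokens of the enumerated set `r`,
then the Jaccard similarity of `r` and `s` is at most `(n - ρ + 1) / n`. -/
theorem jaccard_lookup_position_upper_bound
    {α : Type*} [DecidableEq α] (n : ℕ) (a : Fin n → α) (ha : Function.Injective a)
    (r : Finset α) (hr : r = Finset.image a Finset.univ)
    (ρ : ℕ) (hρ1 : 1 ≤ ρ) (hρn : ρ ≤ n)
    (s : Finset α) (hs : ∀ j : Fin n, (j : ℕ) < ρ - 1 → a j ∉ s) :
    ((r ∩ s).card : ℝ) / ((r ∪ s).card : ℝ) ≤ ((n : ℝ) - ρ + 1) / (n : ℝ) :=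
  jaccard_lookup_position_upper_bound_general n a ha r hr ρ hρn s hs
end

section
/- Define d : ℕ → ℕ → ℕ → ℝ by d(a,b,o) = 2·o / (a + b) (real division, naturals cast to ℝ). Then for all a, b with a + b > 0: (1) d(a,b,0) = 0; (2) d(a,b,o) = d(b,a,o) for all o; (3) for all o ≤ o' ≤ min(a,b), d(a,b,o) ≤ d(a,b,o'); (4) for all b ≤ b' ≤ a, d(a,b,b) ≤ d(a,b',b'); (5) for all o ≤ b ≤ b', d(a,b',o) ≤ d(a,b,o). -/
/-- The Dice similarity as a function of the set cardinalities and the overlap. -/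
noncomputable def diceSim (a b o : ℕ) : ℝ := 2 * (o : ℝ) / ((a : ℝ) + (b : ℝ))

lemma div_add_self_le_div_add_self {𝕜 : Type*} [Field 𝕜] [LinearOrder 𝕜] [IsStrictOrderedRing 𝕜]
    {x y y' : 𝕜} (hx : 0 ≤ x) (hy : 0 ≤ y) (hyy' : y ≤ y') :
    y / (x + y) ≤ y' / (x + y') := by
  rcases hy.eq_or_lt with rfl | hy
  · simp only [zero_div]
    exact div_nonneg hyy' (add_nonneg hx hyy')
  rw [div_le_div_iff₀ (by positivity) (by linarith)]
  nlinarith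

namespace diceSim

lemma overlap_zero (a b : ℕ) : diceSim a b 0 = 0 := by
  simp [diceSim]

lemma comm (a b o : ℕ) : diceSim a b o = diceSim b a o := by
  rw [diceSim, diceSim, add_comm]

lemma monotone_overlap (a b : ℕ) : Monotone (diceSim a b) := by
  intro o o' h
  unfold diceSim
  gcongr

lemma monotone_self (a : ℕ) : Monotone fun b ↦ diceSim a b b := by
  intro b b' h
  simp only [diceSim, mul_div_assoc]
  exact mul_le_mul_of_nonneg_left
    (div_add_self_le_div_add_self a.cast_nonneg b.cast_nonneg (mod_cast h)) zero_le_two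

-- For `o = 0` both sides vanish; otherwise `o ≤ b` keeps the smaller denominator positive.
lemma antitone_size {a b b' o : ℕ} (hob : o ≤ b) (hbb' : b ≤ b') :
    diceSim a b' o ≤ diceSim a b o := by
  rcases Nat.eq_zero_or_pos o with rfl | ho
  · simp [overlap_zero]
  have hpos : (0 : ℝ) < a + b := by
    have : (0 : ℝ) < b := by exact_mod_cast ho.trans_le hob
    positivity
  unfold diceSim
  gcongr

end diceSim

theorem dice_well_behaved_general (a b : ℕ) :
    diceSim a b 0 = 0 ∧
    (∀ o, diceSim a b o = diceSim b a o) ∧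
    (∀ o o', o ≤ o' → o' ≤ min a b → diceSim a b o ≤ diceSim a b o') ∧
    (∀ b', b ≤ b' → b' ≤ a → diceSim a b b ≤ diceSim a b' b') ∧
    (∀ b' o, o ≤ b → b ≤ b' → diceSim a b' o ≤ diceSim a b o) :=
  ⟨diceSim.overlap_zero a b, diceSim.comm a b,
    fun _ _ h _ ↦ diceSim.monotone_overlap a b h,
    fun _ h _ ↦ diceSim.monotone_self a h,
    fun _ _ hob hbb' ↦ diceSim.antitone_size hob hbb'⟩

/-- Dice is a well-behaved similarity function (plus antitonicity in set size). -/
theorem dice_well_behaved (a b : ℕ) (hab : 0 < a + b) :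
    diceSim a b 0 = 0 ∧
    (∀ o, diceSim a b o = diceSim b a o) ∧
    (∀ o o', o ≤ o' → o' ≤ min a b → diceSim a b o ≤ diceSim a b o') ∧
    (∀ b', b ≤ b' → b' ≤ a → diceSim a b b ≤ diceSim a b' b') ∧
    (∀ b' o, o ≤ b → b ≤ b' → diceSim a b' o ≤ diceSim a b o) :=
  dice_well_behaved_general a b
end

section
/- For all finite sets r, s of tokens with r ∪ s nonempty and every real τ ≥ 0: |r ∩ s| / |r ∪ s| ≥ τ if and only if |r ∩ s| ≥ (τ / (1 + τ)) · (|r| + |s|) (as real numbers, with the cardinalities cast to ℝ). -/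
/-! By inclusion–exclusion `|r| + |s| = |r ∪ s| + |r ∩ s|`, so with `o = |r ∩ s|` and `u = |r ∪ s|`
the condition `τ ≤ o / u` reads `τ u ≤ o`, i.e. `τ (u + o) ≤ (1 + τ) o`. -/

lemma le_div_iff_div_one_add_mul_add_le {τ o u : ℝ} (hτ : 0 < 1 + τ) (hu : 0 < u) :
    τ ≤ o / u ↔ τ / (1 + τ) * (u + o) ≤ o := by
  rw [le_div_iff₀ hu, div_mul_eq_mul_div, div_le_iff₀ hτ]
  constructor <;> intro h <;> linarith

/-- Minimum-overlap characterization for the Jaccard similarity: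
`overlap(l_r, l_s, τ) = (τ/(1+τ))·(l_r + l_s)`. -/
theorem jaccard_overlap_characterization
    {α : Type*} [DecidableEq α] (r s : Finset α) (hrs : (r ∪ s).Nonempty)
    (τ : ℝ) (hτ : 0 ≤ τ) :
    τ ≤ ((r ∩ s).card : ℝ) / ((r ∪ s).card : ℝ) ↔
      τ / (1 + τ) * ((r.card : ℝ) + (s.card : ℝ)) ≤ ((r ∩ s).card : ℝ) := by
  have hunion : 0 < ((r ∪ s).card : ℝ) := by exact_mod_cast Finset.card_pos.mpr hrs
  have hcard : (r.card : ℝ) + s.card = (r ∪ s).card + (r ∩ s).card := by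
    exact_mod_cast (Finset.card_union_add_card_inter r s).symm
  rw [hcard]
  exact le_div_iff_div_one_add_mul_add_le (by linarith) hunion
end

section
/- Let P be a finite set with functions v : P → ℝ and e : P → ℝ, where v is injective, and let k ≥ 1. Suppose every p ∈ P is relevant in P, i.e., for every p ∈ P the cardinality of {q ∈ P : v(q) > v(p) and e(q) ≥ e(p)} is less than k. Then for every t ∈ ℝ, the cardinality of {p ∈ P : e(p) = t} is at most k. -/
/-!
Among the pairs ending at `t`, the one of least similarity is outranked by every other one,
and each of those ends no earlier than it; relevance of that pair bounds their number by `k - 1`.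
-/

namespace Finset

theorem filter_lt_eq_erase_of_forall_le {α β : Type*} [LinearOrder β] [DecidableEq α]
    {S : Finset α} {v : α → β} (hv : Set.InjOn v S) {p : α} (hp : p ∈ S)
    (hmin : ∀ q ∈ S, v p ≤ v q) :
    S.filter (fun q => v p < v q) = S.erase p := by
  ext q
  simp only [mem_filter, mem_erase]
  constructor
  · rintro ⟨hq, hlt⟩
    exact ⟨fun h => hlt.ne (congrArg v h.symm), hq⟩
  · rintro ⟨hne, hq⟩
    exact ⟨hq, (hmin q hq).lt_of_ne fun h => hne (hv hq hp h.symm)⟩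

end Finset

open Finset

theorem minimal_stock_end_time_count_general
    {α : Type*} (P : Finset α) (v e : α → ℝ) (hv : Set.InjOn v ↑P)
    (k : ℕ)
    (hrel : ∀ p ∈ P, (P.filter (fun q => v p < v q ∧ e p ≤ e q)).card < k) :
    ∀ t : ℝ, (P.filter (fun p => e p = t)).card ≤ k := by
  classical
  intro t
  set S := P.filter (fun p => e p = t)
  rcases S.eq_empty_or_nonempty with hS | hS
  · simp [hS]
  obtain ⟨p, hpS, hmin⟩ := S.exists_min_image v hS
  have hpP : p ∈ P := (mem_filter.mp hpS).1
  have hhigher : S.erase p ⊆ P.filter (fun q => v p < v q ∧ e p ≤ e q) := by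
    rw [← filter_lt_eq_erase_of_forall_le (hv.mono (filter_subset _ _)) hpS hmin]
    intro q hq
    simp only [S, mem_filter] at hq hpS ⊢
    exact ⟨hq.1.1, hq.2, (hpS.2.trans hq.1.2.symm).le⟩
  calc S.card = (S.erase p).card + 1 := (card_erase_add_one hpS).symm
    _ ≤ (P.filter (fun q => v p < v q ∧ e p ≤ e q)).card + 1 := by gcongr
    _ ≤ k := hrel p hpP

/-- In a minimal stock, at most `k` pairs share any given end time. -/
theorem minimal_stock_end_time_count
    {α : Type*} (P : Finset α) (v e : α → ℝ) (hv : Set.InjOn v ↑P)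
    (k : ℕ) (hk : 1 ≤ k)
    (hrel : ∀ p ∈ P, (P.filter (fun q => v p < v q ∧ e p ≤ e q)).card < k) :
    ∀ t : ℝ, (P.filter (fun p => e p = t)).card ≤ k :=
  minimal_stock_end_time_count_general P v e hv k hrel
end

section
/- Let P be a finite set with functions v : P → ℝ and e : P → ℝ, where v is injective, and let k ≥ 1. Suppose every p ∈ P is relevant in P, i.e., for every p ∈ P the cardinality of {q ∈ P : v(q) > v(p) and e(q) ≥ e(p)} is less than k. Then |P| ≤ k · n, where n is the number of distinct values taken by e on P (the cardinality of the image of e). -/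
open Finset

section

variable {α β γ : Type*} [LinearOrder β]

theorem Finset.exists_card_le_card_filter_lt_add_one {s : Finset α} {v : α → β}
    (hv : Set.InjOn v s) (hs : s.Nonempty) :
    ∃ p ∈ s, #s ≤ #(s.filter (fun q => v p < v q)) + 1 := by
  classical
  obtain ⟨p, hp, hmin⟩ := s.exists_min_image v hs
  refine ⟨p, hp, ?_⟩
  have herase : s.erase p ⊆ s.filter (fun q => v p < v q) := fun q hq => by
    obtain ⟨hqp, hq⟩ := mem_erase.mp hq
    exact mem_filter.mpr ⟨hq, (hmin q hq).lt_of_ne fun h => hqp (hv hq hp h.symm)⟩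
  have hcard := card_le_card herase
  rw [card_erase_of_mem hp] at hcard
  omega

/-- The pair of least similarity among those ending at `t` is dominated by all the others. -/
theorem card_filter_eq_le_of_card_dominators_lt [LinearOrder γ] {P : Finset α}
    {v : α → β} {e : α → γ} (hv : Set.InjOn v P) {k : ℕ}
    (hrel : ∀ p ∈ P, #(P.filter (fun q => v p < v q ∧ e p ≤ e q)) < k) (t : γ) :
    #(P.filter (fun p => e p = t)) ≤ k := by
  rcases (P.filter (fun p => e p = t)).eq_empty_or_nonempty with hF | hF
  · simp [hF]
  obtain ⟨p, hp, hcard⟩ :=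
    exists_card_le_card_filter_lt_add_one (hv.mono (coe_subset.mpr (filter_subset _ P))) hF
  obtain ⟨hpP, hpt⟩ := mem_filter.mp hp
  have hdom : (P.filter (fun p => e p = t)).filter (fun q => v p < v q) ⊆
      P.filter (fun q => v p < v q ∧ e p ≤ e q) := fun q hq => by
    obtain ⟨hqF, hlt⟩ := mem_filter.mp hq
    obtain ⟨hqP, hqt⟩ := mem_filter.mp hqF
    exact mem_filter.mpr ⟨hqP, hlt, (hpt.trans hqt.symm).le⟩
  have hlt := (card_le_card hdom).trans_lt (hrel p hpP)
  omega

end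

theorem minimal_stock_size_general
    {α : Type*} (P : Finset α) (v e : α → ℝ) (hv : Set.InjOn v ↑P)
    (k : ℕ)
    (hrel : ∀ p ∈ P, (P.filter (fun q => v p < v q ∧ e p ≤ e q)).card < k) :
    P.card ≤ k * (P.image e).card := by
  calc #P = ∑ t ∈ P.image e, #(P.filter (fun p => e p = t)) :=
        card_eq_sum_card_fiberwise fun _ => mem_image_of_mem e
    _ ≤ ∑ _t ∈ P.image e, k :=
        sum_le_sum fun t _ => card_filter_eq_le_of_card_dominators_lt hv hrel t
    _ = k * #(P.image e) := by rw [sum_const, smul_eq_mul, mul_comm]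

/-- The size of a minimal stock is at most `k` times the number of distinct end times. -/
theorem minimal_stock_size
    {α : Type*} [DecidableEq α] (P : Finset α) (v e : α → ℝ) (hv : Set.InjOn v ↑P)
    (k : ℕ) (hk : 1 ≤ k)
    (hrel : ∀ p ∈ P, (P.filter (fun q => v p < v q ∧ e p ≤ e q)).card < k) :
    P.card ≤ k * (P.image e).card :=
  minimal_stock_size_general P v e hv k hrel
end

section
/- Let P be a finite set with functions v : P → ℝ and e : P → ℝ, where v is injective, and let k ≥ 1. Suppose P is minimal, i.e., for every p ∈ P the cardinality of {q ∈ P : v(q) > v(p) and e(q) ≥ e(p)} is less than k. Let t ∈ ℝ and let m be the cardinality of {p ∈ P : e(p) < t}. If |P| ≥ k + m, then the k-th largest value of v over {p ∈ P : e(p) ≥ t} equals the (k + m)-th largest value of v over all of P. Equivalently: among the k + m − 1 elements of P with the largest v-values, exactly m satisfy e(p) < t, and the element of P with the (k+m)-th largest v-value satisfies e(p) ≥ t. -/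
/-- The `k`-th largest element of a multiset of reals
(the `k`-th entry of the multiset sorted in decreasing order). -/
noncomputable def kthLargest (M : Multiset ℝ) (k : ℕ) : ℝ :=
  (M.sort (· ≥ ·)).getD (k - 1) 0

/-!
An expired pair `q` (one with `e q < t`) is less similar than fewer than `k` pairs ending no earlier
than `q`, by minimality, and than at most the `m - 1` other expired pairs, so its similarity rank is
below `k + m`. Hence the `(k + m)`-th most similar pair `p` is still valid, and it is also less
similar than every expired pair; of the `k + m - 1` pairs above `p`, exactly `m` are expired, so
exactly `k - 1` valid pairs are above it and `p` is the `k`-th most similar valid pair.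
-/

open Finset

theorem List.countP_lt_getElem_of_pairwise_gt {β : Type*} [LinearOrder β] {l : List β}
    (hl : l.Pairwise (· > ·)) {i : ℕ} (hi : i < l.length) :
    l.countP (l[i] < ·) = i := by
  induction l generalizing i with
  | nil => simp at hi
  | cons a l ih =>
    obtain ⟨ha, hl⟩ := List.pairwise_cons.1 hl
    cases i with
    | zero =>
      simpa [List.countP_eq_zero] using fun y hy => (ha y hy).le
    | succ i =>
      have hi : i < l.length := by simpa using hi
      simp [ih hl hi, ha _ (List.getElem_mem hi)]

theorem Multiset.pairwise_sort_gt_of_nodup {β : Type*} [LinearOrder β] {M : Multiset β}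
    (hM : M.Nodup) : (M.sort (· ≥ ·)).Pairwise (· > ·) := by
  have hnd : (M.sort (· ≥ ·)).Nodup := by
    rw [← Multiset.coe_nodup, Multiset.sort_eq]; exact hM
  exact ((Multiset.pairwise_sort M _).and hnd).imp fun h => lt_of_le_of_ne h.1 h.2.symm

theorem Multiset.countP_lt_sort_getElem {β : Type*} [LinearOrder β] {M : Multiset β}
    (hM : M.Nodup) {i : ℕ} (hi : i < (M.sort (· ≥ ·)).length) :
    M.countP ((M.sort (· ≥ ·))[i] < ·) = i := by
  have hl := Multiset.pairwise_sort_gt_of_nodup hM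
  generalize hlM : M.sort (· ≥ ·) = l at hi hl ⊢
  rw [← Multiset.sort_eq M (· ≥ ·), hlM, Multiset.coe_countP]
  exact List.countP_lt_getElem_of_pairwise_gt hl hi

theorem kthLargest_eq_of_countP_add_one_eq {M : Multiset ℝ} (hM : M.Nodup) {x : ℝ}
    (hx : x ∈ M) {k : ℕ} (hk : M.countP (x < ·) + 1 = k) : kthLargest M k = x := by
  obtain ⟨i, hi, rfl⟩ := List.getElem_of_mem ((Multiset.mem_sort (· ≥ ·)).2 hx)
  rw [Multiset.countP_lt_sort_getElem hM hi] at hk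
  subst hk
  exact List.getD_eq_getElem _ _ hi

theorem Multiset.exists_mem_countP_add_one_eq {β : Type*} [LinearOrder β] {M : Multiset β}
    (hM : M.Nodup) {k : ℕ} (hk : 1 ≤ k) (hkM : k ≤ Multiset.card M) :
    ∃ x ∈ M, M.countP (x < ·) + 1 = k := by
  have hi : k - 1 < (M.sort (· ≥ ·)).length := by rw [Multiset.length_sort]; omega
  refine ⟨_, (Multiset.mem_sort (· ≥ ·)).1 (List.getElem_mem hi), ?_⟩
  rw [Multiset.countP_lt_sort_getElem hM hi]
  omega

section Rank

variable {α β : Type*} [LinearOrder β] {S : Finset α} {v : α → β}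

theorem Finset.countP_lt_map_val (S : Finset α) (v : α → β) (p : α) :
    (S.val.map v).countP (v p < ·) = #{r ∈ S | v p < v r} := by
  rw [Multiset.countP_map]; rfl

theorem exists_mem_card_filter_lt_add_one_eq (hv : Set.InjOn v S) {k : ℕ} (hk : 1 ≤ k)
    (hkS : k ≤ #S) : ∃ p ∈ S, #{r ∈ S | v p < v r} + 1 = k := by
  obtain ⟨x, hx, hcount⟩ := Multiset.exists_mem_countP_add_one_eq
    (S.nodup.map_on fun _ ha _ hb h => hv ha hb h) hk (by rwa [Multiset.card_map])
  obtain ⟨p, hp, rfl⟩ := Multiset.mem_map.1 hx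
  exact ⟨p, hp, by rwa [countP_lt_map_val] at hcount⟩

end Rank

theorem kthLargest_map_val_eq {α : Type*} {S : Finset α} {v : α → ℝ} (hv : Set.InjOn v S)
    {p : α} (hp : p ∈ S) {k : ℕ} (hk : #{r ∈ S | v p < v r} + 1 = k) :
    kthLargest (S.val.map v) k = v p :=
  kthLargest_eq_of_countP_add_one_eq (S.nodup.map_on fun _ ha _ hb h => hv ha hb h)
    (Multiset.mem_map_of_mem v hp) (by rwa [countP_lt_map_val])

section Stock

variable {α β γ : Type*} [LinearOrder β] [LinearOrder γ]

def IsMinimalStock (P : Finset α) (v : α → β) (e : α → γ) (k : ℕ) : Prop :=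
  ∀ p ∈ P, #{q ∈ P | v p < v q ∧ e p ≤ e q} < k

variable {P : Finset α} {v : α → β} {e : α → γ} {k : ℕ} {t : γ} {p q : α}

namespace IsMinimalStock

theorem card_filter_lt_add_one_lt (hP : IsMinimalStock P v e k) (hq : q ∈ P) (hqt : e q < t) :
    #{r ∈ P | v q < v r} + 1 < k + #{r ∈ P | e r < t} := by
  classical
  have hqE : q ∈ ({r ∈ P | e r < t} : Finset α) := mem_filter.2 ⟨hq, hqt⟩
  have hcover : {r ∈ P | v q < v r} ⊆
      {r ∈ P | v q < v r ∧ e q ≤ e r} ∪ {r ∈ P | e r < t}.erase q := by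
    intro r hr
    obtain ⟨hrP, hvr⟩ := mem_filter.1 hr
    by_cases her : e q ≤ e r
    · exact mem_union_left _ (mem_filter.2 ⟨hrP, hvr, her⟩)
    · exact mem_union_right _ (mem_erase.2 ⟨fun h => (h ▸ hvr).false,
        mem_filter.2 ⟨hrP, (not_le.1 her).trans hqt⟩⟩)
  have hcard := (card_le_card hcover).trans (card_union_le _ _)
  have hdominating := hP q hq
  have hexpired_pos := card_pos.2 ⟨q, hqE⟩
  rw [card_erase_of_mem hqE] at hcard
  omega

variable (hP : IsMinimalStock P v e k)
  (hrank : #{r ∈ P | v p < v r} + 1 = k + #{r ∈ P | e r < t})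
include hP hrank

theorem le_of_rank_eq (hp : p ∈ P) : t ≤ e p :=
  le_of_not_gt fun hpt => (hP.card_filter_lt_add_one_lt hp hpt).ne hrank

theorem filter_lt_subset_of_rank_eq : {r ∈ P | e r < t} ⊆ {r ∈ P | v p < v r} := by
  intro q hq
  obtain ⟨hqP, hqt⟩ := mem_filter.1 hq
  refine mem_filter.2 ⟨hqP, lt_of_not_ge fun hqp => ?_⟩
  have hcard := card_le_card (monotone_filter_right P (p := (v p < v ·)) fun _ _ => hqp.trans_lt)
  have hrank_q := hP.card_filter_lt_add_one_lt hqP hqt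
  omega

theorem card_filter_valid_add_one_eq : #{r ∈ {r ∈ P | t ≤ e r} | v p < v r} + 1 = k := by
  have hexpired : {r ∈ {r ∈ P | v p < v r} | e r < t} = {r ∈ P | e r < t} := by
    rw [filter_filter]
    refine filter_congr fun r hr => ⟨And.right, fun hrt => ⟨?_, hrt⟩⟩
    exact (mem_filter.1 (filter_lt_subset_of_rank_eq hP hrank (mem_filter.2 ⟨hr, hrt⟩))).2
  have hvalid :
      {r ∈ {r ∈ P | t ≤ e r} | v p < v r} = {r ∈ {r ∈ P | v p < v r} | ¬e r < t} := by
    rw [filter_filter, filter_filter]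
    exact filter_congr fun r _ => by rw [not_lt, and_comm]
  have hsplit := card_filter_add_card_filter_not (s := {r ∈ P | v p < v r}) (fun r => e r < t)
  rw [hexpired, ← hvalid] at hsplit
  omega

end IsMinimalStock

end Stock

/-- Skyband-boundary lemma: in a minimal stock, the `k`-th most similar pair still
valid at time `t` is the `(k + m)`-th most similar pair overall, where `m` is the
number of pairs ending before `t`. -/
theorem minimal_stock_skyband_alignment
    {α : Type*} (P : Finset α) (v e : α → ℝ) (hv : Set.InjOn v ↑P)
    (k : ℕ) (hk : 1 ≤ k)
    (hmin : ∀ p ∈ P, (P.filter (fun q => v p < v q ∧ e p ≤ e q)).card < k)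
    (t : ℝ) (hcard : k + (P.filter (fun p => e p < t)).card ≤ P.card) :
    kthLargest (Multiset.map v (P.filter (fun p => t ≤ e p)).val) k =
      kthLargest (Multiset.map v P.val) (k + (P.filter (fun p => e p < t)).card) := by
  have hP : IsMinimalStock P v e k := hmin
  obtain ⟨p, hp, hrank⟩ := exists_mem_card_filter_lt_add_one_eq hv (by omega) hcard
  rw [kthLargest_map_val_eq hv hp hrank]
  exact kthLargest_map_val_eq (hv.mono (filter_subset _ _))
    (mem_filter.2 ⟨hp, hP.le_of_rank_eq hrank hp⟩) (hP.card_filter_valid_add_one_eq hrank)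
end

section
/- Let P be a finite set with functions v : P → ℝ and e : P → ℝ, where v is injective, and let k ≥ 1. Call p ∈ P irrelevant in P if the cardinality of {q ∈ P : v(q) > v(p) and e(q) ≥ e(p)} is at least k. Order P by the lexicographic order on (e(p), v(p)), both components ascending (the end-time order E, with ties in end time broken by ascending similarity). Suppose p ∈ P is irrelevant in P and every other irrelevant element of P comes strictly after p in this order, and let u = 1 + |{q ∈ P : (e(q), v(q)) <_lex (e(p), v(p))}| be p's position in the order. Then |{q ∈ P : v(q) > v(p)}| ≥ u + k − 1; that is, p's position in the descending-similarity order of P exceeds u + k − 1. -/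
/-! The pairs that precede `p` in the end-time order all have larger similarity than `p`: a
predecessor `q` with smaller similarity would end no later than `p`, so every dominator of `p`
would also dominate `q`, making `q` an irrelevant pair before `p`. These predecessors are
disjoint from the at least `k` dominators of `p`, and both sets consist of pairs more similar
than `p`, which bounds the position of `p` in the similarity order. -/

open Finset

section Dominators

variable {α β γ : Type*} [LinearOrder β] [LinearOrder γ]

def dominators (P : Finset α) (v : α → β) (e : α → γ) (p : α) : Finset α :=
  P.filter fun q => v p < v q ∧ e p ≤ e q

def endOrderPredecessors (P : Finset α) (v : α → β) (e : α → γ) (p : α) : Finset α :=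
  P.filter fun q => e q < e p ∨ (e q = e p ∧ v q < v p)

variable {P : Finset α} {v : α → β} {e : α → γ} {p q : α}

lemma dominators_subset_dominators (hv : v q ≤ v p) (he : e q ≤ e p) :
    dominators P v e p ⊆ dominators P v e q := by
  intro x hx
  simp only [dominators, mem_filter] at hx ⊢
  exact ⟨hx.1, hv.trans_lt hx.2.1, he.trans hx.2.2⟩

lemma le_of_mem_endOrderPredecessors (hq : q ∈ endOrderPredecessors P v e p) : e q ≤ e p := by
  rcases (mem_filter.1 hq).2 with h | ⟨h, -⟩
  exacts [h.le, h.le]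

lemma lt_of_mem_endOrderPredecessors {k : ℕ} (hv : Set.InjOn v P) (hp : p ∈ P)
    (hirr : k ≤ #(dominators P v e p))
    (hfirst : ∀ q ∈ P, q ≠ p → k ≤ #(dominators P v e q) →
      e p < e q ∨ (e p = e q ∧ v p < v q))
    (hq : q ∈ endOrderPredecessors P v e p) : v p < v q := by
  obtain ⟨hqP, hbefore⟩ := mem_filter.1 hq
  have hqp : q ≠ p := by
    rintro rfl
    rcases hbefore with h | ⟨-, h⟩ <;> exact lt_irrefl _ h
  by_contra! hvqp
  have hvlt : v q < v p := hvqp.lt_of_ne fun h => hqp (hv hqP hp h)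
  have hqirr : k ≤ #(dominators P v e q) :=
    hirr.trans (card_le_card (dominators_subset_dominators hvlt.le
      (le_of_mem_endOrderPredecessors hq)))
  rcases hfirst q hqP hqp hqirr with h | ⟨-, h⟩
  exacts [(le_of_mem_endOrderPredecessors hq).not_gt h, h.not_gt hvlt]

lemma disjoint_dominators_endOrderPredecessors :
    Disjoint (dominators P v e p) (endOrderPredecessors P v e p) := by
  refine disjoint_left.2 fun x hxA hxB => ?_
  obtain ⟨-, hvx, hex⟩ := mem_filter.1 hxA
  rcases (mem_filter.1 hxB).2 with h | ⟨-, h⟩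
  exacts [hex.not_gt h, hvx.not_gt h]

lemma card_dominators_add_card_endOrderPredecessors_le {k : ℕ} (hv : Set.InjOn v P)
    (hp : p ∈ P) (hirr : k ≤ #(dominators P v e p))
    (hfirst : ∀ q ∈ P, q ≠ p → k ≤ #(dominators P v e q) →
      e p < e q ∨ (e p = e q ∧ v p < v q)) :
    #(dominators P v e p) + #(endOrderPredecessors P v e p) ≤ #(P.filter (v p < v ·)) := by
  classical
  rw [← card_union_of_disjoint disjoint_dominators_endOrderPredecessors]
  refine card_le_card fun x hx => mem_filter.2 ⟨?_, ?_⟩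
  · rcases mem_union.1 hx with h | h <;> exact (mem_filter.1 h).1
  · rcases mem_union.1 hx with h | h
    · exact (mem_filter.1 h).2.1
    · exact lt_of_mem_endOrderPredecessors hv hp hirr hfirst h

end Dominators

theorem first_irrelevant_position_general
    {α : Type*} (P : Finset α) (v e : α → ℝ) (hv : Set.InjOn v ↑P)
    (k : ℕ)
    (p : α) (hp : p ∈ P)
    (hirr : k ≤ (P.filter (fun q => v p < v q ∧ e p ≤ e q)).card)
    (hfirst : ∀ q ∈ P, q ≠ p →
      k ≤ (P.filter (fun q' => v q < v q' ∧ e q ≤ e q')).card →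
      (e p < e q ∨ (e p = e q ∧ v p < v q))) :
    (1 + (P.filter (fun q => e q < e p ∨ (e q = e p ∧ v q < v p))).card) + k - 1 ≤
      (P.filter (fun q => v p < v q)).card := by
  have := card_dominators_add_card_endOrderPredecessors_le hv hp hirr hfirst
  simp only [dominators, endOrderPredecessors] at this
  omega

/-- Cleanup lemma: if `p` is the first irrelevant pair in the end-time order `E`
(ties in end time broken by ascending similarity), at position `u`, then the position
of `p` in the descending-similarity order `S` exceeds `u + k - 1`. -/
theorem first_irrelevant_position
    {α : Type*} (P : Finset α) (v e : α → ℝ) (hv : Set.InjOn v ↑P)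
    (k : ℕ) (hk : 1 ≤ k)
    (p : α) (hp : p ∈ P)
    (hirr : k ≤ (P.filter (fun q => v p < v q ∧ e p ≤ e q)).card)
    (hfirst : ∀ q ∈ P, q ≠ p →
      k ≤ (P.filter (fun q' => v q < v q' ∧ e q ≤ e q')).card →
      (e p < e q ∨ (e p = e q ∧ v p < v q))) :
    (1 + (P.filter (fun q => e q < e p ∨ (e q = e p ∧ v q < v p))).card) + k - 1 ≤
      (P.filter (fun q => v p < v q)).card :=
  first_irrelevant_position_general P v e hv k p hp hirr hfirst
end

section
/- Let S and C be disjoint finite sets with functions v : S ∪ C → ℝ and e : S ∪ C → ℝ, where v is injective, and let k ≥ 1. Suppose every p ∈ S is relevant in S, i.e., |{q ∈ S : v(q) > v(p) and e(q) ≥ e(p)}| < k for every p ∈ S. Then every p ∈ S that is irrelevant in S ∪ C, i.e., with |{q ∈ S ∪ C : v(q) > v(p) and e(q) ≥ e(p)}| ≥ k, satisfies v(p) ≤ max_{c ∈ C} v(c) and e(p) ≤ max_{c ∈ C} e(c) (in particular C is nonempty). -/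
/-! If `p` is dominated by at least `k` elements of `S ∪ C` but by fewer than `k` elements
of `S`, then some candidate `c ∈ C` dominates `p`, i.e. `v p < v c` and `e p ≤ e c`; hence `p`
lies below the coordinatewise maximum of `C`. -/

theorem Finset.exists_mem_of_card_filter_lt_card_filter_union {α : Type*} [DecidableEq α]
    {S C : Finset α} {P : α → Prop} [DecidablePred P]
    (h : (S.filter P).card < ((S ∪ C).filter P).card) : ∃ c ∈ C, P c := by
  by_contra! hC
  have hCP : C.filter P = ∅ := Finset.filter_eq_empty_iff.mpr hC
  rw [Finset.filter_union, hCP, Finset.union_empty] at h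
  exact lt_irrefl _ h

theorem optimized_cleanup_general
    {α : Type*} [DecidableEq α] (S C : Finset α)
    (v e : α → ℝ)
    (k : ℕ)
    (hrel : ∀ p ∈ S, (S.filter (fun q => v p < v q ∧ e p ≤ e q)).card < k) :
    ∀ p ∈ S, k ≤ ((S ∪ C).filter (fun q => v p < v q ∧ e p ≤ e q)).card →
      ∃ hC : C.Nonempty, v p ≤ C.sup' hC v ∧ e p ≤ C.sup' hC e := by
  intro p hp hirr
  obtain ⟨c, hcC, hvc, hec⟩ :=
    Finset.exists_mem_of_card_filter_lt_card_filter_union ((hrel p hp).trans_le hirr)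
  exact ⟨⟨c, hcC⟩, hvc.le.trans (C.le_sup' v hcC), hec.trans (C.le_sup' e hcC)⟩

/-- Optimized-cleanup lemma: after adding a candidate set `C` to a minimal stock `S`,
every pair of `S` that became irrelevant has similarity at most `max_{c ∈ C} v(c)` and
end time at most `max_{c ∈ C} e(c)` (in particular `C` is nonempty). -/
theorem optimized_cleanup
    {α : Type*} [DecidableEq α] (S C : Finset α) (hSC : Disjoint S C)
    (v e : α → ℝ) (hv : Set.InjOn v ↑(S ∪ C))
    (k : ℕ) (hk : 1 ≤ k)
    (hrel : ∀ p ∈ S, (S.filter (fun q => v p < v q ∧ e p ≤ e q)).card < k) :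
    ∀ p ∈ S, k ≤ ((S ∪ C).filter (fun q => v p < v q ∧ e p ≤ e q)).card →
      ∃ hC : C.Nonempty, v p ≤ C.sup' hC v ∧ e p ≤ C.sup' hC e :=
  optimized_cleanup_general S C v e k hrel
end
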